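/- arXiv:2106.08032 — 3 statements merged into one kernel-verified Lean document; each statement's English description precedes it below -/
import Mathlib

section
/- Let A be a commutative normed ring, let M be a normed A-module, and let N be a topological A-module whose scalar multiplication A × N → N is continuous. Suppose there exist n ∈ ℕ and an A-linear map π : Aⁿ → M (with Aⁿ carrying the sup norm) that is surjective, continuous, and open. Then every A-linear map F : M → N is continuous. -/
/-- Let `A` be a commutative normed ring, `M` a normed `A`-module and `N` a topological
`A`-module whose scalar multiplication `A × N → N` is continuous. If there exist `n : ℕ`
and an `A`-linear map `π : Aⁿ → M` (with `Aⁿ` carrying the sup norm) that is surjective,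
continuous and open, then every `A`-linear map `F : M → N` is continuous. -/
theorem continuous_of_linear_of_admissible_presentation
    {A : Type*} [NormedCommRing A]
    {M : Type*} [NormedAddCommGroup M] [Module A M] [IsBoundedSMul A M]
    {N : Type*} [AddCommGroup N] [TopologicalSpace N] [IsTopologicalAddGroup N]
    [Module A N] [ContinuousSMul A N]
    {n : ℕ} (π : (Fin n → A) →ₗ[A] M)
    (hsurj : Function.Surjective π) (hcont : Continuous π) (hopen : IsOpenMap π)
    (F : M →ₗ[A] N) : Continuous F := by
  have hq := hopen.isQuotientMap hcont hsurj
  rw [hq.continuous_iff]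
  have key : ∀ x : Fin n → A,
      F (π x) = ∑ i, x i • (F.comp π) (fun j => if i = j then 1 else 0) :=
    fun x => (F.comp π).pi_apply_eq_sum_univ x
  have : (F ∘ ⇑π) = fun x : Fin n → A =>
      ∑ i, x i • (F.comp π) (fun j => if i = j then 1 else 0) := by
    funext x; exact key x
  rw [this]
  exact continuous_finset_sum _ fun i _ =>
    (continuous_apply i).smul continuous_const
end

section
/- Let A be a commutative normed ring and let M, N be normed A-modules. Suppose there are n ∈ ℕ, an A-linear surjection π : Aⁿ → M (with Aⁿ carrying the sup norm), and a constant c > 0 such that every x ∈ M admits a preimage a ∈ Aⁿ with π(a) = x and ‖a‖ ≤ c·‖x‖. Then every A-linear map F : M → N is bounded: writing e₁,…,eₙ for the standard basis of Aⁿ, one has ‖F(x)‖ ≤ c · n · (maxᵢ ‖F(π(eᵢ))‖) · ‖x‖ for all x ∈ M. -/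
/-- Quantitative automatic boundedness. Let `A` be a commutative normed ring, `M`, `N`
normed `A`-modules, and suppose `π : Aⁿ → M` (`Aⁿ` with the sup norm) is an `A`-linear
surjection with constant `c > 0` such that every `x ∈ M` admits a preimage `a` with
`‖a‖ ≤ c * ‖x‖`. Then every `A`-linear `F : M → N` satisfies
`‖F x‖ ≤ c * n * (maxᵢ ‖F (π eᵢ)‖) * ‖x‖`, where `eᵢ = Pi.single i 1` is the
standard basis of `Aⁿ`. -/
theorem norm_le_of_linear_of_norm_controlled_lift
    {A : Type*} [NormedCommRing A]
    {M : Type*} [NormedAddCommGroup M] [Module A M] [IsBoundedSMul A M]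
    {N : Type*} [NormedAddCommGroup N] [Module A N] [IsBoundedSMul A N]
    {n : ℕ} (π : (Fin n → A) →ₗ[A] M) (hsurj : Function.Surjective π)
    {c : ℝ} (hc : 0 < c)
    (hlift : ∀ x : M, ∃ a : Fin n → A, π a = x ∧ ‖a‖ ≤ c * ‖x‖)
    (F : M →ₗ[A] N) (x : M) :
    ‖F x‖ ≤ c * n * (⨆ i : Fin n, ‖F (π (Pi.single i 1))‖) * ‖x‖ := by
  obtain ⟨a, ha, hna⟩ := hlift x
  set S : ℝ := ⨆ i : Fin n, ‖F (π (Pi.single i 1))‖ with hS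
  have hbdd : BddAbove (Set.range fun i : Fin n => ‖F (π (Pi.single i 1))‖) :=
    Set.finite_range _ |>.bddAbove
  have hle : ∀ i, ‖F (π (Pi.single i 1))‖ ≤ S := fun i => le_ciSup hbdd i
  have hdecomp : a = ∑ i : Fin n, a i • (Pi.single i 1 : Fin n → A) := by
    ext j
    simp [Finset.sum_apply, Pi.single_apply, Finset.sum_ite_eq']
  have key : F x = ∑ i : Fin n, a i • F (π (Pi.single i 1)) := by
    conv_lhs => rw [← ha, hdecomp]
    rw [map_sum, map_sum]
    simp only [map_smul]
  rw [key]
  calc ‖∑ i : Fin n, a i • F (π (Pi.single i 1))‖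
      ≤ ∑ i : Fin n, ‖a i • F (π (Pi.single i 1))‖ := norm_sum_le _ _
    _ ≤ ∑ i : Fin n, (c * ‖x‖) * S := by
        apply Finset.sum_le_sum
        intro i _
        calc ‖a i • F (π (Pi.single i 1))‖ ≤ ‖a i‖ * ‖F (π (Pi.single i 1))‖ :=
              norm_smul_le _ _
          _ ≤ (c * ‖x‖) * S := by
              apply mul_le_mul _ (hle i) (norm_nonneg _)
                (by positivity)
              exact le_trans (norm_le_pi_norm a i) hna
    _ = c * n * S * ‖x‖ := by
        rw [Finset.sum_const, Finset.card_univ, Fintype.card_fin]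
        push_cast
        ring
end

section
/- Let k be a field complete with respect to a non-trivial non-Archimedean absolute value. Let A be a commutative k-algebra such that: (i) A is Noetherian; (ii) for every maximal ideal 𝔪 of A, the residue field A/𝔪 is finite-dimensional as a k-vector space. Suppose ‖·‖₁ and ‖·‖₂ are two complete submultiplicative norms on A, each making A a Banach k-algebra, and each such that every ideal of A is closed. Then ‖·‖₁ and ‖·‖₂ are equivalent, i.e., they induce the same topology on A. -/
open Filter Topology

/-- A module finitely generated over `B` and killed by an ideal `𝔪` with `B ⧸ 𝔪`
finite over `k` is finite over `k`. -/
theorem finite_of_smul_zero {k B M : Type*} [Field k] [CommRing B] [Algebra k B]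
    (𝔪 : Ideal B) [Module.Finite k (B ⧸ 𝔪)]
    [AddCommGroup M] [Module B M] [Module k M] [IsScalarTower k B M]
    [Module.Finite B M] (htor : ∀ x ∈ 𝔪, ∀ m : M, x • m = 0) :
    Module.Finite k M := by
  have hT : Module.IsTorsionBySet B M 𝔪 := fun m x => htor x.1 x.2 m
  letI : Module (B ⧸ 𝔪) M := hT.module
  haveI : IsScalarTower B (B ⧸ 𝔪) M := hT.isScalarTower
  haveI : IsScalarTower k (B ⧸ 𝔪) M := hT.isScalarTower
  haveI : Module.Finite (B ⧸ 𝔪) M := Module.Finite.of_restrictScalars_finite B _ _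
  exact Module.Finite.trans (B ⧸ 𝔪) M

/-- If `B` is Noetherian with `B ⧸ 𝔪` finite over `k`, then `B ⧸ 𝔪 ^ n` is finite
over `k`. -/
theorem finite_quotient_pow {k B : Type*} [Field k] [CommRing B] [Algebra k B]
    [IsNoetherianRing B] (𝔪 : Ideal B) (h : Module.Finite k (B ⧸ 𝔪)) :
    ∀ n : ℕ, Module.Finite k (B ⧸ 𝔪 ^ n)
  | 0 => by
      have h0 : ∀ y : B ⧸ 𝔪 ^ 0, y = 0 := by
        intro y
        obtain ⟨x, rfl⟩ := Ideal.Quotient.mk_surjective y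
        rw [Ideal.Quotient.eq_zero_iff_mem]
        simp [pow_zero, Ideal.one_eq_top]
      exact Module.Finite.of_surjective (0 : k →ₗ[k] _)
        (fun y => ⟨0, by rw [h0 y, map_zero]⟩)
  | (n + 1) => by
      haveI IH := finite_quotient_pow 𝔪 h n
      haveI := h
      have hle : 𝔪 ^ (n + 1) ≤ 𝔪 ^ n := Ideal.pow_le_pow_right (by omega)
      let f : (B ⧸ 𝔪 ^ (n + 1)) →ₐ[k] B ⧸ 𝔪 ^ n :=
        Ideal.Quotient.liftₐ (𝔪 ^ (n + 1)) (Ideal.Quotient.mkₐ k (𝔪 ^ n))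
          (fun a ha => by
            simpa [Ideal.Quotient.eq_zero_iff_mem] using hle ha)
      have hf_mk : ∀ x : B, f (Ideal.Quotient.mk (𝔪 ^ (n + 1)) x)
          = Ideal.Quotient.mk (𝔪 ^ n) x := fun x => rfl
      have hfs : Function.Surjective f := fun y => by
        obtain ⟨x, rfl⟩ := Ideal.Quotient.mk_surjective y
        exact ⟨Ideal.Quotient.mk _ x, hf_mk x⟩
      -- the kernel, as a `B`-submodule
      let T : Ideal (B ⧸ 𝔪 ^ (n + 1)) := RingHom.ker f
      let MB : Submodule B (B ⧸ 𝔪 ^ (n + 1)) := Submodule.restrictScalars B T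
      haveI : Module.Finite B (B ⧸ 𝔪 ^ (n + 1)) :=
        Module.Finite.of_surjective (Ideal.Quotient.mkₐ B (𝔪 ^ (n + 1))).toLinearMap
          (Ideal.Quotient.mkₐ_surjective B _)
      haveI : Module.Finite B ↥MB :=
        Module.Finite.iff_fg.mpr (IsNoetherian.noetherian MB)
      have htor : ∀ x ∈ 𝔪, ∀ m : ↥MB, x • m = 0 := by
        rintro x hx ⟨m, hm⟩
        apply Subtype.ext
        obtain ⟨b, rfl⟩ := Ideal.Quotient.mk_surjective m
        have hb : b ∈ 𝔪 ^ n := by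
          have h0 : f (Ideal.Quotient.mk _ b) = 0 := hm
          rwa [hf_mk, Ideal.Quotient.eq_zero_iff_mem] at h0
        show x • (Ideal.Quotient.mk (𝔪 ^ (n + 1)) b) = 0
        rw [Algebra.smul_def, Ideal.Quotient.algebraMap_eq, ← map_mul,
          Ideal.Quotient.eq_zero_iff_mem, mul_comm, pow_succ]
        exact Ideal.mul_mem_mul hb hx
      haveI : Module.Finite k ↥MB := finite_of_smul_zero 𝔪 htor
      -- transfer to the `k`-kernel
      let g : (B ⧸ 𝔪 ^ (n + 1)) →ₗ[k] B ⧸ 𝔪 ^ n := f.toLinearMap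
      have hmem : ∀ q : B ⧸ 𝔪 ^ (n + 1), q ∈ MB ↔ q ∈ LinearMap.ker g := by
        intro q
        simp only [MB, T, Submodule.restrictScalars_mem, LinearMap.mem_ker, RingHom.mem_ker]
        rfl
      let eqk : ↥MB ≃ₗ[k] ↥(LinearMap.ker g) :=
        { toFun := fun m => ⟨m.1, (hmem m.1).mp m.2⟩
          invFun := fun m => ⟨m.1, (hmem m.1).mpr m.2⟩
          map_add' := fun _ _ => rfl
          map_smul' := fun _ _ => rfl
          left_inv := fun _ => rfl
          right_inv := fun _ => rfl }
      haveI : Module.Finite k ↥(LinearMap.ker g) := Module.Finite.equiv eqk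
      have hker_fg : (LinearMap.ker g).FG :=
        (Submodule.fg_top _).mp (Module.finite_def.mp ‹_›)
      have hgs : Function.Surjective g := hfs
      refine Module.finite_def.mpr ?_
      refine Submodule.fg_of_fg_map_of_fg_inf_ker g (s := ⊤) ?_ ?_
      · rw [Submodule.map_top, LinearMap.range_eq_top.mpr hgs]
        exact Module.finite_def.mp IH
      · rw [top_inf_eq]
        exact hker_fg

/-- continuity of the quotient map for a closed ideal, seminormed quotient. -/
theorem mk_continuous' {R : Type*} [SeminormedCommRing R] (I : Ideal R) :
    Continuous (Ideal.Quotient.mk I) :=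
  AddMonoidHomClass.continuous_of_bound (Ideal.Quotient.mk I : R →+* R ⧸ I) 1
    (fun x => by simpa using Ideal.Quotient.norm_mk_le I x)

/-- Automatic continuity: a `k`-algebra isomorphism onto a Noetherian Banach algebra
with closed ideals and finite-dimensional residue fields is continuous. -/
theorem cont_aux {k : Type*} [NontriviallyNormedField k] [CompleteSpace k]
    {A B : Type*} [NormedCommRing A] [NormedAlgebra k A] [CompleteSpace A]
    [NormedCommRing B] [NormedAlgebra k B] [CompleteSpace B] [IsNoetherianRing B]
    (hres : ∀ 𝔪 : Ideal B, 𝔪.IsMaximal → FiniteDimensional k (B ⧸ 𝔪))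
    (hA : ∀ I : Ideal A, IsClosed (I : Set A))
    (hB : ∀ I : Ideal B, IsClosed (I : Set B))
    (e : A ≃ₐ[k] B) : Continuous (e : A → B) := by
  have core : ∀ (b : B) (a : ℕ → A), Tendsto a atTop (𝓝 0) →
      Tendsto (fun j => e (a j)) atTop (𝓝 b) → b = 0 := by
    intro b a ha hb
    -- Step 1: b lies in every power of every maximal ideal
    have mem_pow : ∀ (𝔪 : Ideal B), 𝔪.IsMaximal → ∀ n : ℕ, b ∈ 𝔪 ^ n := by
      intro 𝔪 hm n
      haveI : Module.Finite k (B ⧸ 𝔪 ^ n) := finite_quotient_pow 𝔪 (hres 𝔪 hm) n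
      set φ : A →ₐ[k] B ⧸ 𝔪 ^ n := (Ideal.Quotient.mkₐ k (𝔪 ^ n)).comp e.toAlgHom with hφdef
      have hφs : Function.Surjective φ :=
        (Ideal.Quotient.mkₐ_surjective k _).comp e.surjective
      haveI hc1 : IsClosed ((𝔪 ^ n : Ideal B) : Set B) := hB _
      haveI hc2 : IsClosed ((RingHom.ker φ : Ideal A) : Set A) := hA _
      haveI : Module.Finite k (A ⧸ RingHom.ker φ) :=
        Module.Finite.equiv (Ideal.quotientKerAlgEquivOfSurjective hφs).symm.toLinearEquiv
      have hg : Continuous ((Ideal.quotientKerAlgEquivOfSurjective hφs).toLinearMap) :=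
        LinearMap.continuous_of_finiteDimensional _
      have hφc : Continuous φ := by
        have hcomp : (φ : A → B ⧸ 𝔪 ^ n) =
            (Ideal.quotientKerAlgEquivOfSurjective hφs) ∘
              (Ideal.Quotient.mk (RingHom.ker φ)) := by
          funext x
          simp [Ideal.quotientKerAlgEquivOfSurjective,
            Ideal.quotientKerAlgEquivOfRightInverse,
            RingHom.quotientKerEquivOfRightInverse, RingHom.kerLift_mk]
          exact (RingHom.kerLift_mk (φ : A →+* B ⧸ 𝔪 ^ n) x).symm
        rw [hcomp]
        exact hg.comp (mk_continuous' _)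
      have hmkB : Continuous (Ideal.Quotient.mk (𝔪 ^ n)) := mk_continuous' _
      have h1 : Tendsto (fun j => Ideal.Quotient.mk (𝔪 ^ n) (e (a j))) atTop
          (𝓝 (Ideal.Quotient.mk (𝔪 ^ n) b)) := (hmkB.tendsto _).comp hb
      have h2 : Tendsto (fun j => φ (a j)) atTop (𝓝 0) := by
        have := (hφc.tendsto 0).comp ha
        simpa [Function.comp_def] using this
      have h1' : Tendsto (fun j => φ (a j)) atTop (𝓝 (Ideal.Quotient.mk (𝔪 ^ n) b)) := h1
      have : Ideal.Quotient.mk (𝔪 ^ n) b = 0 := tendsto_nhds_unique h1' h2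
      exact Ideal.Quotient.eq_zero_iff_mem.mp this
    -- Step 2: conclude b = 0 via Krull intersection and Nakayama
    by_contra hb0
    have hne : Ideal.torsionOf B B b ≠ ⊤ := by
      intro htop
      have : (1 : B) ∈ Ideal.torsionOf B B b := htop ▸ Submodule.mem_top
      rw [Ideal.mem_torsionOf_iff b 1, one_smul] at this
      exact hb0 this
    obtain ⟨𝔪, hmax, hle⟩ := Ideal.exists_le_maximal _ hne
    have hmem : b ∈ (⨅ i : ℕ, 𝔪 ^ i • ⊤ : Submodule B B) := by
      rw [Submodule.mem_iInf]
      intro i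
      rw [Ideal.smul_eq_mul, Ideal.mul_top]
      exact mem_pow 𝔪 hmax i
    obtain ⟨r, hr⟩ := (Ideal.mem_iInf_smul_pow_eq_bot_iff 𝔪 b).mp hmem
    have h1r : (1 - (r : B)) • b = 0 := by
      rw [sub_smul, one_smul, hr, sub_self]
    have : (1 : B) ∈ 𝔪 := by
      have h1m : (1 - (r : B)) ∈ 𝔪 := hle ((Ideal.mem_torsionOf_iff b (1 - (r : B))).mpr h1r)
      have := 𝔪.add_mem h1m r.2
      simpa using this
    exact hmax.ne_top (Ideal.eq_top_of_unit_mem 𝔪 1 1 this (mul_one 1))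
  -- closed graph theorem
  have hcont : Continuous e.toLinearMap := by
    apply e.toLinearMap.continuous_of_seq_closed_graph
    intro u x y hu hy
    have ha : Tendsto (fun j => u j - x) atTop (𝓝 0) :=
      tendsto_sub_nhds_zero_iff.mpr hu
    have hb : Tendsto (fun j => e (u j - x)) atTop (𝓝 (y - e x)) := by
      have := hy.sub (tendsto_const_nhds (x := e x))
      simpa [map_sub] using this
    have h0 := core (y - e x) _ ha hb
    have : y = e x := by
      have := sub_eq_zero.mp h0
      exact this
    exact this
  exact hcont

/-- Uniqueness of the Banach `k`-algebra topology. Let `k` be a field complete with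
respect to a non-trivial non-Archimedean absolute value. Suppose a `k`-algebra carries
two complete submultiplicative norms, each making it a commutative Banach `k`-algebra
in which every ideal is closed, and suppose the algebra is Noetherian with
finite-dimensional residue fields at all maximal ideals. Then the two norms induce the
same topology. We encode the two normed structures as two commutative Banach
`k`-algebras `A₁`, `A₂` identified by a `k`-algebra isomorphism `e` (the identity on the
underlying algebra); the conclusion is that `e` is a homeomorphism, i.e. both `e` and
`e.symm` are continuous. -/
theorem banach_algebra_topology_unique
    {k : Type*} [NontriviallyNormedField k] [CompleteSpace k] [IsUltrametricDist k]
    (A₁ A₂ : Type*)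
    [NormedCommRing A₁] [NormedAlgebra k A₁] [CompleteSpace A₁]
    [NormedCommRing A₂] [NormedAlgebra k A₂] [CompleteSpace A₂]
    [IsNoetherianRing A₁]
    (hres : ∀ 𝔪 : Ideal A₁, 𝔪.IsMaximal → FiniteDimensional k (A₁ ⧸ 𝔪))
    (h₁closed : ∀ I : Ideal A₁, IsClosed (I : Set A₁))
    (h₂closed : ∀ I : Ideal A₂, IsClosed (I : Set A₂))
    (e : A₁ ≃ₐ[k] A₂) :
    Continuous (e : A₁ → A₂) ∧ Continuous (e.symm : A₂ → A₁) := by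
  haveI : IsNoetherianRing A₂ := isNoetherianRing_of_ringEquiv A₁ e.toRingEquiv
  have hres₂ : ∀ 𝔪 : Ideal A₂, 𝔪.IsMaximal → FiniteDimensional k (A₂ ⧸ 𝔪) := by
    intro 𝔪 hm
    have hmax : (𝔪.comap (e : A₁ →+* A₂)).IsMaximal :=
      Ideal.comap_isMaximal_of_surjective _ e.surjective
    haveI := hres _ hmax
    have equiv : (A₁ ⧸ 𝔪.comap (e : A₁ →+* A₂)) ≃ₐ[k] A₂ ⧸ 𝔪 :=
      Ideal.quotientEquivAlg _ 𝔪 e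
        (Ideal.map_comap_of_surjective _ e.surjective 𝔪).symm
    exact Module.Finite.equiv equiv.toLinearEquiv
  exact ⟨cont_aux hres₂ h₁closed h₂closed e, cont_aux hres h₂closed h₁closed e.symm⟩
end
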